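/- arXiv:2511.10746 — 3 statements merged into one kernel-verified Lean document; each statement's English description precedes it below -/
import Mathlib

section
/- If g₁ and g₂ are the left KLS functions of (P₁,κ₁) and (P₂,κ₂) respectively, then g₁ ⊗ g₂ is the left KLS function of (P₁ × P₂, κ₁ ⊗ κ₂). -/
open Finset Polynomial


variable {P P₁ P₂ : Type*}

/-- A weak rank function on a poset, in the sense of Brenti/CF25. -/
def IsWeakRank [Preorder P] (rk : P → P → ℤ) : Prop :=
  (∀ s t : P, s < t → 0 < rk s t) ∧
    ∀ s u t : P, s ≤ u → u ≤ t → rk s t = rk s u + rk u t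

noncomputable section
open scoped Classical

/-- Membership in the rank-bounded incidence algebra `J_rk(P)`:
functions on intervals with values in `ℤ[x]` of degree bounded by the rank. -/
def InJ [Preorder P] (rk : P → P → ℤ) (a : P → P → Polynomial ℤ) : Prop :=
  (∀ s t : P, ¬ s ≤ t → a s t = 0) ∧
    ∀ s t : P, s ≤ t → ((a s t).natDegree : ℤ) ≤ rk s t

/-- Convolution product in the incidence algebra. -/
def conv [Fintype P] (a b : P → P → Polynomial ℤ) : P → P → Polynomial ℤ :=
  fun s t => ∑ u : P, a s u * b u t

/-- The identity (delta function) of the incidence algebra. -/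
def delta : P → P → Polynomial ℤ := fun s t => if s = t then 1 else 0

/-- The reversal operation `(a^rev)_{s,t} = x^{rk(s,t)}·a_{s,t}(x⁻¹)`. -/
def rev (rk : P → P → ℤ) (a : P → P → Polynomial ℤ) : P → P → Polynomial ℤ :=
  fun s t => (a s t).reflect (rk s t).toNat

/-- Entrywise tensor product of incidence functions on a product poset. -/
def tensor (a₁ : P₁ → P₁ → Polynomial ℤ) (a₂ : P₂ → P₂ → Polynomial ℤ) :
    P₁ × P₂ → P₁ × P₂ → Polynomial ℤ :=
  fun p q => a₁ p.1 q.1 * a₂ p.2 q.2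

/-- The sum rank function on a product poset. -/
def prodRk (rk₁ : P₁ → P₁ → ℤ) (rk₂ : P₂ → P₂ → ℤ) : P₁ × P₂ → P₁ × P₂ → ℤ :=
  fun p q => rk₁ p.1 q.1 + rk₂ p.2 q.2

/-- A kernel: an element of `J_rk(P)` which is invertible with `κ⁻¹ = κ^rev`. -/
def IsKernel [Preorder P] [Fintype P] (rk : P → P → ℤ) (κ : P → P → Polynomial ℤ) : Prop :=
  InJ rk κ ∧ conv κ (rev rk κ) = delta ∧ conv (rev rk κ) κ = delta

/-- The reduced kernel `κ̄`: `κ̄_{s,s} = -1` and `κ̄_{s,t} = κ_{s,t}/(x-1)` for `s ≠ t`. -/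
def IsReducedKernel [Preorder P] (κ κb : P → P → Polynomial ℤ) : Prop :=
  (∀ s : P, κb s s = -1) ∧ ∀ s t : P, s ≠ t → (X - 1) * κb s t = κ s t

/-- The Chow function `H = -κ̄⁻¹` associated to a reduced kernel `κ̄`. -/
def IsChowFunction [Preorder P] [Fintype P] (κb H : P → P → Polynomial ℤ) : Prop :=
  conv κb H = -delta ∧ conv H κb = -delta

/-- The right KLS function of `(P, κ)`. -/
def IsRightKLS [Preorder P] [Fintype P] (rk : P → P → ℤ)
    (κ f : P → P → Polynomial ℤ) : Prop :=
  InJ rk f ∧ (∀ s : P, f s s = 1) ∧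
    (∀ s t : P, s < t → 2 * ((f s t).natDegree : ℤ) < rk s t) ∧
    rev rk f = conv κ f

/-- The left KLS function of `(P, κ)`. -/
def IsLeftKLS [Preorder P] [Fintype P] (rk : P → P → ℤ)
    (κ g : P → P → Polynomial ℤ) : Prop :=
  InJ rk g ∧ (∀ s : P, g s s = 1) ∧
    (∀ s t : P, s < t → 2 * ((g s t).natDegree : ℤ) < rk s t) ∧
    rev rk g = conv g κ

/-- The zeta function of a poset. -/
def zeta [Preorder P] : P → P → Polynomial ℤ := fun s t => if s ≤ t then 1 else 0

/-- Convolution powers. -/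
def convPow [Fintype P] (a : P → P → Polynomial ℤ) : ℕ → P → P → Polynomial ℤ
  | 0 => delta
  | k + 1 => conv a (convPow a k)

/-- The inverse of a unitriangular element of the incidence algebra,
via the finite geometric series `∑ (I - a)^k`. -/
def invInc [Fintype P] (a : P → P → Polynomial ℤ) : P → P → Polynomial ℤ :=
  ∑ k ∈ Finset.range (Fintype.card P), convPow (delta - a) k

/-- The characteristic function `χ = ζ⁻¹ · ζ^rev` of a weakly ranked poset. -/
def charFn [Preorder P] [Fintype P] (rk : P → P → ℤ) : P → P → Polynomial ℤ :=
  conv (invInc zeta) (rev rk zeta)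

/-- The reduced characteristic function `χ̄`. -/
def charFnRed [Preorder P] [Fintype P] (rk : P → P → ℤ) : P → P → Polynomial ℤ :=
  fun s t => if s = t then -1 else charFn rk s t /ₘ (X - C 1)

/-- The Chow function `H = -χ̄⁻¹` of a weakly ranked poset w.r.t. the characteristic kernel. -/
def chowFn [Preorder P] [Fintype P] (rk : P → P → ℤ) : P → P → Polynomial ℤ :=
  invInc (-(charFnRed rk))

end

lemma rk_self_eq_zero {P : Type*} [Preorder P] {rk : P → P → ℤ}
    (h : IsWeakRank rk) (s : P) : rk s s = 0 := by
  have := h.2 s s s le_rfl le_rfl; linarith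

lemma rk_nonneg {P : Type*} [PartialOrder P] {rk : P → P → ℤ}
    (h : IsWeakRank rk) {s t : P} (hst : s ≤ t) : 0 ≤ rk s t := by
  rcases eq_or_lt_of_le hst with rfl | hlt
  · simp [rk_self_eq_zero h]
  · exact (h.1 s t hlt).le

lemma conv_tensor {P₁ P₂ : Type*} [Fintype P₁] [Fintype P₂]
    (a₁ b₁ : P₁ → P₁ → Polynomial ℤ) (a₂ b₂ : P₂ → P₂ → Polynomial ℤ) :
    conv (tensor a₁ a₂) (tensor b₁ b₂) = tensor (conv a₁ b₁) (conv a₂ b₂) := by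
  funext s t
  have h : conv (tensor a₁ a₂) (tensor b₁ b₂) s t
      = ∑ u₁ : P₁, ∑ u₂ : P₂, (a₁ s.1 u₁ * b₁ u₁ t.1) * (a₂ s.2 u₂ * b₂ u₂ t.2) := by
    rw [conv, Fintype.sum_prod_type]
    exact Finset.sum_congr rfl fun u₁ _ => Finset.sum_congr rfl fun u₂ _ => by
      simp only [tensor]; ring
  rw [h, tensor]
  show _ = conv a₁ b₁ s.1 t.1 * conv a₂ b₂ s.2 t.2
  rw [conv, conv, Finset.sum_mul_sum]

/-- The tensor product of the left KLS functions of `(P₁,κ₁)` and `(P₂,κ₂)` is the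
left KLS function of `(P₁ × P₂, κ₁ ⊗ κ₂)`. -/
theorem tensor_isLeftKLS {P₁ P₂ : Type*} [PartialOrder P₁] [Fintype P₁]
    [PartialOrder P₂] [Fintype P₂]
    (rk₁ : P₁ → P₁ → ℤ) (rk₂ : P₂ → P₂ → ℤ)
    (h₁ : IsWeakRank rk₁) (h₂ : IsWeakRank rk₂)
    (κ₁ : P₁ → P₁ → Polynomial ℤ) (κ₂ : P₂ → P₂ → Polynomial ℤ)
    (hκ₁ : IsKernel rk₁ κ₁) (hκ₂ : IsKernel rk₂ κ₂)
    (g₁ : P₁ → P₁ → Polynomial ℤ) (g₂ : P₂ → P₂ → Polynomial ℤ)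
    (hg₁ : IsLeftKLS rk₁ κ₁ g₁) (hg₂ : IsLeftKLS rk₂ κ₂ g₂) :
    IsLeftKLS (prodRk rk₁ rk₂) (tensor κ₁ κ₂) (tensor g₁ g₂) := by
  obtain ⟨⟨hz₁, hd₁⟩, hs₁, hlt₁, hrev₁⟩ := hg₁
  obtain ⟨⟨hz₂, hd₂⟩, hs₂, hlt₂, hrev₂⟩ := hg₂
  refine ⟨⟨?_, ?_⟩, ?_, ?_, ?_⟩
  · intro s t h
    rw [Prod.le_def, not_and_or] at h
    rcases h with h | h
    · simp [tensor, hz₁ _ _ h]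
    · simp [tensor, hz₂ _ _ h]
  · intro s t h
    rw [Prod.le_def] at h
    have b₁ := hd₁ _ _ h.1
    have b₂ := hd₂ _ _ h.2
    have := Polynomial.natDegree_mul_le (p := g₁ s.1 t.1) (q := g₂ s.2 t.2)
    simp only [tensor, prodRk]
    push_cast
    calc ((g₁ s.1 t.1 * g₂ s.2 t.2).natDegree : ℤ)
        ≤ ((g₁ s.1 t.1).natDegree : ℤ) + ((g₂ s.2 t.2).natDegree : ℤ) := by exact_mod_cast this
      _ ≤ rk₁ s.1 t.1 + rk₂ s.2 t.2 := add_le_add b₁ b₂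
  · intro s; simp [tensor, hs₁, hs₂]
  · intro s t h
    have hdeg : ((tensor g₁ g₂ s t).natDegree : ℤ)
        ≤ ((g₁ s.1 t.1).natDegree : ℤ) + ((g₂ s.2 t.2).natDegree : ℤ) := by
      exact_mod_cast Polynomial.natDegree_mul_le (p := g₁ s.1 t.1) (q := g₂ s.2 t.2)
    have hle := h.le
    rw [Prod.le_def] at hle
    have key : 2 * (((g₁ s.1 t.1).natDegree : ℤ) + ((g₂ s.2 t.2).natDegree : ℤ))
        < rk₁ s.1 t.1 + rk₂ s.2 t.2 := by
      rcases eq_or_lt_of_le hle.1 with e₁ | l₁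
      · rcases eq_or_lt_of_le hle.2 with e₂ | l₂
        · exfalso; exact h.ne (Prod.ext e₁ e₂)
        · have := hlt₂ _ _ l₂
          rw [← e₁]
          simp only [hs₁, rk_self_eq_zero h₁]
          simp only [Polynomial.natDegree_one]
          push_cast; linarith
      · rcases eq_or_lt_of_le hle.2 with e₂ | l₂
        · have := hlt₁ _ _ l₁
          rw [← e₂]
          simp only [hs₂, rk_self_eq_zero h₂]
          simp only [Polynomial.natDegree_one]
          push_cast; linarith
        · have := hlt₁ _ _ l₁; have := hlt₂ _ _ l₂; linarith
    simp only [prodRk]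
    linarith
  · rw [conv_tensor]
    funext s t
    by_cases hle : s ≤ t
    · rw [Prod.le_def] at hle
      have r₁ := rk_nonneg h₁ hle.1
      have r₂ := rk_nonneg h₂ hle.2
      have b₁ : (g₁ s.1 t.1).natDegree ≤ (rk₁ s.1 t.1).toNat :=
        (Int.le_toNat r₁).2 (hd₁ _ _ hle.1)
      have b₂ : (g₂ s.2 t.2).natDegree ≤ (rk₂ s.2 t.2).toNat :=
        (Int.le_toNat r₂).2 (hd₂ _ _ hle.2)
      show (tensor g₁ g₂ s t).reflect (prodRk rk₁ rk₂ s t).toNat = _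
      have htn : (prodRk rk₁ rk₂ s t).toNat = (rk₁ s.1 t.1).toNat + (rk₂ s.2 t.2).toNat := by
        simp only [prodRk]; omega
      rw [htn]
      show (g₁ s.1 t.1 * g₂ s.2 t.2).reflect _ = conv g₁ κ₁ s.1 t.1 * conv g₂ κ₂ s.2 t.2
      rw [← congrFun (congrFun hrev₁ s.1) t.1, ← congrFun (congrFun hrev₂ s.2) t.2]
      exact Polynomial.reflect_mul _ _ b₁ b₂
    · rw [Prod.le_def, not_and_or] at hle
      show (tensor g₁ g₂ s t).reflect _ = conv g₁ κ₁ s.1 t.1 * conv g₂ κ₂ s.2 t.2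
      rcases hle with hle | hle
      · rw [← congrFun (congrFun hrev₁ s.1) t.1]
        simp [tensor, hz₁ _ _ hle, rev]
      · rw [← congrFun (congrFun hrev₂ s.2) t.2]
        simp [tensor, hz₂ _ _ hle, rev]
end

section
/- Let H₁, H₂, H be the Chow functions of weakly ranked posets P₁, P₂, and P₁×P₂ with respect to kernels κ₁, κ₂, and κ = κ₁⊗κ₂. Then H = H₁⊗H₂ + x·(H₁⊗H₂)·H − x·(I⊗H₂)·H − x·(H₁⊗I)·H + x·H. -/
open Finset Polynomial


variable {P P₁ P₂ : Type*}

noncomputable section AuxChow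
open scoped Classical

variable {P P₁ P₂ : Type*} [Fintype P] [Fintype P₁] [Fintype P₂]

lemma conv_assoc' (a b c : P → P → Polynomial ℤ) :
    conv (conv a b) c = conv a (conv b c) := by
  funext s t
  simp only [conv, Finset.sum_mul, Finset.mul_sum, mul_assoc]
  exact Finset.sum_comm

lemma conv_delta_right' (a : P → P → Polynomial ℤ) : conv a delta = a := by
  funext s t; simp [conv, delta]

lemma conv_delta_left' (a : P → P → Polynomial ℤ) : conv delta a = a := by
  funext s t; simp [conv, delta]

lemma conv_add_right' (a b c : P → P → Polynomial ℤ) :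
    conv a (b + c) = conv a b + conv a c := by
  funext s t; simp [conv, mul_add, Finset.sum_add_distrib]

lemma conv_add_left' (a b c : P → P → Polynomial ℤ) :
    conv (a + b) c = conv a c + conv b c := by
  funext s t; simp [conv, add_mul, Finset.sum_add_distrib]

lemma conv_smul_right' (r : Polynomial ℤ) (a b : P → P → Polynomial ℤ) :
    conv a (r • b) = r • conv a b := by
  funext s t; simp [conv, Finset.mul_sum, mul_left_comm]

lemma conv_smul_left' (r : Polynomial ℤ) (a b : P → P → Polynomial ℤ) :
    conv (r • a) b = r • conv a b := by
  funext s t; simp [conv, Finset.mul_sum, mul_assoc]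

lemma conv_neg_right' (a b : P → P → Polynomial ℤ) : conv a (-b) = -conv a b := by
  funext s t; simp [conv, Finset.sum_neg_distrib]

lemma conv_sub_left' (a b c : P → P → Polynomial ℤ) :
    conv (a - b) c = conv a c - conv b c := by
  funext s t; simp [conv, sub_mul, Finset.sum_sub_distrib]

lemma tensor_conv' (a₁ b₁ : P₁ → P₁ → Polynomial ℤ) (a₂ b₂ : P₂ → P₂ → Polynomial ℤ) :
    conv (tensor a₁ a₂) (tensor b₁ b₂) = tensor (conv a₁ b₁) (conv a₂ b₂) := by
  funext s t
  simp only [conv, tensor, Fintype.sum_prod_type]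
  rw [Finset.sum_mul_sum]
  refine Finset.sum_congr rfl fun u₁ _ => Finset.sum_congr rfl fun u₂ _ => ?_
  ring

lemma tensor_delta_delta' :
    tensor (delta : P₁ → P₁ → Polynomial ℤ) (delta : P₂ → P₂ → Polynomial ℤ) = delta := by
  funext s t
  simp only [tensor, delta, Prod.ext_iff]
  split_ifs <;> simp_all

end AuxChow
/-- Chow functions of a product of weakly ranked posets:
`H = H₁⊗H₂ + x·(H₁⊗H₂)·H − x·(I⊗H₂)·H − x·(H₁⊗I)·H + x·H`. -/
theorem chowFunction_prod_left {P₁ P₂ : Type*} [PartialOrder P₁] [Fintype P₁]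
    [PartialOrder P₂] [Fintype P₂]
    (rk₁ : P₁ → P₁ → ℤ) (rk₂ : P₂ → P₂ → ℤ)
    (h₁ : IsWeakRank rk₁) (h₂ : IsWeakRank rk₂)
    (κ₁ : P₁ → P₁ → Polynomial ℤ) (κ₂ : P₂ → P₂ → Polynomial ℤ)
    (hκ₁ : IsKernel rk₁ κ₁) (hκ₂ : IsKernel rk₂ κ₂)
    (hd₁ : ∀ s : P₁, κ₁ s s = 1) (hd₂ : ∀ s : P₂, κ₂ s s = 1)
    (κb₁ : P₁ → P₁ → Polynomial ℤ) (κb₂ : P₂ → P₂ → Polynomial ℤ)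
    (κb : P₁ × P₂ → P₁ × P₂ → Polynomial ℤ)
    (hr₁ : IsReducedKernel κ₁ κb₁) (hr₂ : IsReducedKernel κ₂ κb₂)
    (hr : IsReducedKernel (tensor κ₁ κ₂) κb)
    (H₁ : P₁ → P₁ → Polynomial ℤ) (H₂ : P₂ → P₂ → Polynomial ℤ)
    (H : P₁ × P₂ → P₁ × P₂ → Polynomial ℤ)
    (hH₁ : IsChowFunction κb₁ H₁) (hH₂ : IsChowFunction κb₂ H₂)
    (hH : IsChowFunction κb H) :
    H = tensor H₁ H₂ + (X : Polynomial ℤ) • conv (tensor H₁ H₂) H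
        - (X : Polynomial ℤ) • conv (tensor delta H₂) H
        - (X : Polynomial ℤ) • conv (tensor H₁ delta) H
        + (X : Polynomial ℤ) • H := by
  classical
  have hX : (X - 1 : Polynomial ℤ) ≠ 0 := by
    intro h
    have := congrArg (Polynomial.eval 2) h
    simp at this
  have e₁ : ∀ s t : P₁, (X - 1 : Polynomial ℤ) * κb₁ s t = κ₁ s t - X * delta s t := by
    intro s t
    by_cases h : s = t
    · subst h; rw [hr₁.1, hd₁]; simp [delta]
    · rw [hr₁.2 s t h]; simp [delta, h]
  have e₂ : ∀ s t : P₂, (X - 1 : Polynomial ℤ) * κb₂ s t = κ₂ s t - X * delta s t := by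
    intro s t
    by_cases h : s = t
    · subst h; rw [hr₂.1, hd₂]; simp [delta]
    · rw [hr₂.2 s t h]; simp [delta, h]
  have e : ∀ s t : P₁ × P₂,
      (X - 1 : Polynomial ℤ) * κb s t = κ₁ s.1 t.1 * κ₂ s.2 t.2 - X * delta s t := by
    intro s t
    by_cases h : s = t
    · subst h; rw [hr.1, hd₁, hd₂]; simp [delta]
    · have := hr.2 s t h
      rw [this]; simp [tensor, delta, h]
  have hdprod : ∀ s t : P₁ × P₂,
      (delta : P₁ × P₂ → P₁ × P₂ → Polynomial ℤ) s t = delta s.1 t.1 * delta s.2 t.2 := by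
    intro s t
    exact (congrFun (congrFun (tensor_delta_delta' (P₁ := P₁) (P₂ := P₂)).symm s) t)
  have hκb : κb = (X - 1 : Polynomial ℤ) • tensor κb₁ κb₂ + (X : Polynomial ℤ) • tensor κb₁ delta
      + (X : Polynomial ℤ) • tensor delta κb₂ + (X : Polynomial ℤ) • (delta : P₁ × P₂ → P₁ × P₂ → Polynomial ℤ) := by
    funext s t
    apply mul_left_cancel₀ hX
    simp only [Pi.add_apply, Pi.smul_apply, smul_eq_mul, tensor]
    rw [e s t, hdprod s t]
    linear_combination (-((X - 1 : Polynomial ℤ) * κb₂ s.2 t.2 + X * delta s.2 t.2)) * e₁ s.1 t.1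
      - κ₁ s.1 t.1 * e₂ s.2 t.2
  have key : conv (tensor H₁ H₂) κb =
      (X - 1 : Polynomial ℤ) • (delta : P₁ × P₂ → P₁ × P₂ → Polynomial ℤ) - (X : Polynomial ℤ) • tensor delta H₂ - (X : Polynomial ℤ) • tensor H₁ delta
        + (X : Polynomial ℤ) • tensor H₁ H₂ := by
    rw [hκb, conv_add_right', conv_add_right', conv_add_right', conv_smul_right',
      conv_smul_right', conv_smul_right', conv_smul_right', tensor_conv', tensor_conv',
      tensor_conv', hH₁.2, hH₂.2, conv_delta_right', conv_delta_right', conv_delta_right']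
    rw [← tensor_delta_delta' (P₁ := P₁) (P₂ := P₂)]
    funext s t
    simp only [Pi.add_apply, Pi.sub_apply, Pi.smul_apply, smul_eq_mul, tensor, Pi.neg_apply]
    ring
  have h3 : conv (conv (tensor H₁ H₂) κb) H = -(tensor H₁ H₂) := by
    rw [conv_assoc', hH.1, conv_neg_right', conv_delta_right']
  rw [key, conv_add_left', conv_sub_left', conv_sub_left', conv_smul_left', conv_smul_left',
    conv_smul_left', conv_smul_left', conv_delta_left'] at h3
  funext s t
  have h := congrFun (congrFun h3 s) t
  simp only [Pi.add_apply, Pi.sub_apply, Pi.smul_apply, Pi.neg_apply, smul_eq_mul] at h ⊢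
  linear_combination -h
end

section
/- For the lattice of flats of a loopless matroid M viewed as a weakly ranked poset with the characteristic function χ as kernel, the entry H_{∅,M} of the Chow function H = −χ̄^{-1} is a polynomial with nonnegative integer coefficients of degree rk(M) − 1. -/
open Finset Polynomial


variable {P P₁ P₂ : Type*}

open Matroid in
/-- The closure of any set in a matroid is a flat. -/
lemma matroid_closure_flat {α : Type*} (M : Matroid α) (X : Set α) :
    M.IsFlat (M.closure X) := by
  rw [Matroid.closure_def]
  have hne : Nonempty {F : Set α // M.IsFlat F ∧ X ∩ M.E ⊆ F} :=
    ⟨⟨M.E, M.ground_isFlat, Set.inter_subset_right⟩⟩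
  have h := Matroid.IsFlat.iInter
    (Fs := fun F : {F : Set α // M.IsFlat F ∧ X ∩ M.E ⊆ F} => F.1) (fun F => F.2.1)
  convert h using 1
  ext x
  simp [Set.mem_sInter, Set.mem_iInter, Subtype.forall]

/-- The lattice of flats of a matroid, as a poset under inclusion. -/
abbrev Flats {α : Type*} (M : Matroid α) : Type _ := {F : Set α // M.IsFlat F}

noncomputable instance flatsFintype {α : Type*} [Fintype α] (M : Matroid α) :
    Fintype (Flats M) := by classical exact Subtype.fintype _

noncomputable section
open scoped Classical

/-- The rank of a set in a matroid: the largest cardinality of an independent subset. -/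
def matRank {α : Type*} (M : Matroid α) (X : Set α) : ℕ :=
  sSup {n : ℕ | ∃ I : Set α, M.Indep I ∧ I ⊆ X ∧ I.ncard = n}

/-- The weak rank function `rk(F,G) = rk(G) - rk(F)` on the lattice of flats. -/
def flatRk {α : Type*} (M : Matroid α) : Flats M → Flats M → ℤ :=
  fun F G => (matRank M G.1 : ℤ) - (matRank M F.1 : ℤ)

open Matroid in
/-- Contraction of a matroid, defined by duality: `M ／ C = (M✶ ＼ C)✶`. -/
def matContract {α : Type*} (M : Matroid α) (C : Set α) : Matroid α :=
  (M✶ ↾ (M.E \ C))✶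

/-- The Hilbert series of the Chow ring of a matroid: by `CF25`, it is the Chow
polynomial of the lattice of flats w.r.t. the characteristic kernel, i.e. the
entry `H_{∅̄, E}` of the Chow function. -/
def chowHilbert {α : Type*} [Fintype α] (M : Matroid α) : Polynomial ℤ :=
  chowFn (flatRk M) ⟨M.closure ∅, matroid_closure_flat M ∅⟩ ⟨M.E, M.ground_isFlat⟩

/-- The Hilbert series of the augmented Chow ring of a matroid, computed from a
left KLS function `g` of its lattice of flats: the entry `(g^rev · H)_{∅̄, E}`
of the left augmented Chow function. -/
def augChowHilbert {α : Type*} [Fintype α] (M : Matroid α)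
    (g : Flats M → Flats M → Polynomial ℤ) : Polynomial ℤ :=
  conv (rev (flatRk M) g) (chowFn (flatRk M))
    ⟨M.closure ∅, matroid_closure_flat M ∅⟩ ⟨M.E, M.ground_isFlat⟩

end

/-!
Realize the incidence algebra of `P` as the ring of matrices over `ℤ[x]` supported on `s ≤ t`;
`invInc` is then the geometric-series inverse of a unitriangular matrix. Since `ζ^rev` and `ζ`
agree at `x = 1`, so do `χ = ζ⁻¹ζ^rev` and the identity, whence `(x - 1)χ̄ = χ - x`. Put
`Q_{s,t} = x + x² + ⋯ + x^{rk(s,t)-1}` for `s < t`, so that `(x - 1)Q = ζ^rev - xζ + (x - 1)`;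
multiplying `-χ̄H = 1` on the left by `(x - 1)ζ` turns it into the recursion `H = ζ + QH`.
Unfolded, it writes `H_{s,t}` as a sum over chains `s < u₁ < ⋯ < u_k ≤ t` of products of
entries of `Q`: all coefficients are nonnegative, every term has degree at most `rk(s,t) - 1`,
and `1 + Q_{s,t}` contributes `x^{rk(s,t)-1}` with coefficient one.
-/

theorem coeff_nonneg_of_mem_lifts {R : Type*} [Semiring R] [PartialOrder R] [IsOrderedRing R]
    {p : R[X]} (hp : p ∈ lifts (Nat.castRingHom R)) (k : ℕ) : 0 ≤ p.coeff k := by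
  obtain ⟨n, hn⟩ := (lifts_iff_coeff_lifts p).1 hp k
  rw [← hn]
  exact Nat.cast_nonneg n

section Incidence

variable (R P : Type*) [Ring R] [PartialOrder P] [Fintype P] [DecidableEq P]

def incidenceSubring : Subring (Matrix P P R) where
  carrier := {A | ∀ s t, ¬ s ≤ t → A s t = 0}
  zero_mem' _ _ _ := rfl
  one_mem' s t h := Matrix.one_apply_ne fun hst => h hst.le
  add_mem' hA hB s t h := by simp [hA s t h, hB s t h]
  neg_mem' hA s t h := by simp [hA s t h]
  mul_mem' {A B} hA hB s t h := by
    refine Finset.sum_eq_zero fun u _ => show A s u * B u t = 0 from ?_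
    by_cases hsu : s ≤ u
    · rw [hB u t fun hut => h (hsu.trans hut), mul_zero]
    · rw [hA s u hsu, zero_mul]

variable {R P}

def IsUnitriangular (A : Matrix P P R) : Prop :=
  A ∈ incidenceSubring R P ∧ ∀ s, A s s = 1

theorem mul_apply_self_of_mem_incidenceSubring {A B : Matrix P P R}
    (hA : A ∈ incidenceSubring R P) (hB : B ∈ incidenceSubring R P) (s : P) :
    (A * B) s s = A s s * B s s := by
  rw [Matrix.mul_apply, Finset.sum_eq_single s]
  · intro u _ hus
    by_cases hsu : s ≤ u
    · rw [hB u s fun hus' => hus (le_antisymm hus' hsu), mul_zero]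
    · rw [hA s u hsu, zero_mul]
  · simp

theorem IsUnitriangular.mul {A B : Matrix P P R} (hA : IsUnitriangular A)
    (hB : IsUnitriangular B) : IsUnitriangular (A * B) :=
  ⟨mul_mem hA.1 hB.1, fun s => by
    rw [mul_apply_self_of_mem_incidenceSubring hA.1 hB.1, hA.2, hB.2, one_mul]⟩

theorem ncard_Iio_add_le_of_pow_apply_ne_zero {N : Matrix P P R}
    (hN : N ∈ incidenceSubring R P) (hdiag : ∀ s, N s s = 0) :
    ∀ (k : ℕ) (s t : P), (N ^ k) s t ≠ 0 → (Set.Iio s).ncard + k ≤ (Set.Iio t).ncard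
  | 0, s, t, h => by
    rw [pow_zero, Matrix.one_apply] at h
    split_ifs at h with hst
    · simp [hst]
    · exact absurd rfl h
  | k + 1, s, t, h => by
    rw [pow_succ', Matrix.mul_apply] at h
    obtain ⟨u, -, hu⟩ := Finset.exists_ne_zero_of_sum_ne_zero h
    have hsu : N s u ≠ 0 := left_ne_zero_of_mul hu
    have hlt : s < u := lt_of_le_of_ne (by_contra fun h' => hsu (hN s u h'))
      fun h' => hsu (h' ▸ hdiag s)
    have := ncard_Iio_add_le_of_pow_apply_ne_zero hN hdiag k u t (right_ne_zero_of_mul hu)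
    have := Set.ncard_strictMono (Set.Iio_ssubset_Iio hlt)
    omega

theorem pow_card_eq_zero_of_mem_incidenceSubring {N : Matrix P P R}
    (hN : N ∈ incidenceSubring R P) (hdiag : ∀ s, N s s = 0) : N ^ Fintype.card P = 0 := by
  ext s t
  by_contra h
  have hle := ncard_Iio_add_le_of_pow_apply_ne_zero hN hdiag _ s t h
  have : (Set.Iio t).ncard < Fintype.card P := by
    rw [← Nat.card_eq_fintype_card]
    exact Set.ncard_lt_card fun h => lt_irrefl t (h.symm ▸ Set.mem_univ t :)
  omega

theorem IsUnitriangular.one_sub_pow_card {A : Matrix P P R} (hA : IsUnitriangular A) :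
    (1 - A) ^ Fintype.card P = 0 :=
  pow_card_eq_zero_of_mem_incidenceSubring (sub_mem (one_mem _) hA.1) fun s => by
    simp [hA.2]

end Incidence

section IncidenceInverse

variable {P : Type*}

theorem of_conv [Fintype P] (a b : P → P → ℤ[X]) :
    Matrix.of (conv a b) = Matrix.of a * Matrix.of b :=
  rfl

theorem of_delta [DecidableEq P] : Matrix.of (delta : P → P → ℤ[X]) = 1 := by
  ext s t
  simp only [delta, Matrix.of_apply, Matrix.one_apply]
  congr

variable [Fintype P] [DecidableEq P]

theorem of_convPow (a : P → P → ℤ[X]) (k : ℕ) :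
    Matrix.of (convPow a k) = Matrix.of a ^ k := by
  induction k with
  | zero => exact of_delta
  | succ k ih => rw [convPow, of_conv, ih, pow_succ']

theorem of_invInc (a : P → P → ℤ[X]) :
    Matrix.of (invInc a) = ∑ k ∈ range (Fintype.card P), (1 - Matrix.of a) ^ k := by
  rw [invInc]
  change ∑ k ∈ range (Fintype.card P), Matrix.of (convPow (delta - a) k) = _
  simp only [of_convPow, ← Matrix.of_sub_of, of_delta]

variable [PartialOrder P] {a : P → P → ℤ[X]} (ha : IsUnitriangular (Matrix.of a))
include ha

theorem invInc_mul : Matrix.of (invInc a) * Matrix.of a = 1 := by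
  simpa [of_invInc, ha.one_sub_pow_card] using
    geom_sum_mul_neg (1 - Matrix.of a) (Fintype.card P)

theorem mul_invInc : Matrix.of a * Matrix.of (invInc a) = 1 := by
  simpa [of_invInc, ha.one_sub_pow_card] using
    mul_neg_geom_sum (1 - Matrix.of a) (Fintype.card P)

theorem isUnitriangular_invInc : IsUnitriangular (Matrix.of (invInc a)) := by
  have hmem : Matrix.of (invInc a) ∈ incidenceSubring ℤ[X] P := by
    rw [of_invInc]
    exact sum_mem fun k _ => pow_mem (sub_mem (one_mem _) ha.1) k
  refine ⟨hmem, fun s => ?_⟩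
  have := congrFun (congrFun (invInc_mul ha) s) s
  rwa [mul_apply_self_of_mem_incidenceSubring hmem ha.1, ha.2, mul_one,
    Matrix.one_apply_eq] at this

end IncidenceInverse

namespace IsWeakRank

variable {P : Type*} [PartialOrder P] {rk : P → P → ℤ} (hrk : IsWeakRank rk)
include hrk

theorem apply_self (s : P) : rk s s = 0 := by
  have := hrk.2 s s s le_rfl le_rfl
  omega

theorem nonneg {s t : P} (h : s ≤ t) : 0 ≤ rk s t := by
  rcases h.eq_or_lt with rfl | hlt
  · exact (hrk.apply_self s).ge
  · exact (hrk.1 s t hlt).le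

theorem toNat_add {s u t : P} (hsu : s ≤ u) (hut : u ≤ t) :
    (rk s t).toNat = (rk s u).toNat + (rk u t).toNat := by
  have := hrk.2 s u t hsu hut
  have := hrk.nonneg hsu
  have := hrk.nonneg hut
  omega

end IsWeakRank

section CharFn

variable {P : Type*} [PartialOrder P] {rk : P → P → ℤ}

open scoped Classical in
theorem rev_zeta_apply (s t : P) :
    rev rk zeta s t = if s ≤ t then X ^ (rk s t).toNat else 0 := by
  unfold rev zeta
  split_ifs
  · simp
  · exact reflect_zero

variable [Fintype P] [DecidableEq P]

theorem isUnitriangular_zeta : IsUnitriangular (Matrix.of (zeta : P → P → ℤ[X])) :=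
  ⟨fun _ _ h => if_neg h, fun _ => if_pos le_rfl⟩

theorem rev_zeta_mem_incidenceSubring : Matrix.of (rev rk zeta) ∈ incidenceSubring ℤ[X] P :=
  fun s t h => by simp [rev_zeta_apply, h]

theorem isUnitriangular_rev_zeta (hrk : IsWeakRank rk) :
    IsUnitriangular (Matrix.of (rev rk zeta)) :=
  ⟨rev_zeta_mem_incidenceSubring, fun s => by simp [rev_zeta_apply, hrk.apply_self]⟩

theorem charFn_mem_incidenceSubring : Matrix.of (charFn rk) ∈ incidenceSubring ℤ[X] P :=
  mul_mem (isUnitriangular_invInc isUnitriangular_zeta).1 rev_zeta_mem_incidenceSubring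

theorem isUnitriangular_charFn (hrk : IsWeakRank rk) : IsUnitriangular (Matrix.of (charFn rk)) :=
  (isUnitriangular_invInc isUnitriangular_zeta).mul (isUnitriangular_rev_zeta hrk)

theorem zeta_mul_charFn :
    Matrix.of zeta * Matrix.of (charFn rk) = Matrix.of (rev rk zeta) := by
  rw [charFn, of_conv, ← mul_assoc, mul_invInc isUnitriangular_zeta, one_mul]

theorem charFn_map_eval_one : (Matrix.of (charFn rk)).map (eval 1) = 1 := by
  have hrev :
      (Matrix.of (rev rk zeta)).map (evalRingHom 1) = (Matrix.of zeta).map (evalRingHom 1) := by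
    ext s t
    simp only [Matrix.map_apply, Matrix.of_apply, rev_zeta_apply, zeta]
    split_ifs <;> simp
  have hinv := congrArg (Matrix.map · (evalRingHom (1 : ℤ)))
    (invInc_mul (P := P) isUnitriangular_zeta)
  simp only [Matrix.map_mul] at hinv
  rw [charFn, of_conv, ← coe_evalRingHom, Matrix.map_mul, hrev, hinv, Matrix.map_one] <;> simp

theorem sub_one_mul_charFnRed {s t : P} (hst : s ≠ t) :
    (X - C 1) * charFnRed rk s t = charFn rk s t := by
  rw [charFnRed, if_neg hst, mul_divByMonic_eq_iff_isRoot, IsRoot,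
    ← Matrix.of_apply (charFn rk) s t, ← Matrix.map_apply (f := eval 1), charFn_map_eval_one,
    Matrix.one_apply_ne hst]

theorem sub_one_smul_charFnRed (hrk : IsWeakRank rk) :
    (X - C 1 : ℤ[X]) • Matrix.of (charFnRed rk) =
      Matrix.of (charFn rk) - (X : ℤ[X]) • 1 := by
  ext s t : 1
  by_cases hst : s = t
  · subst hst
    simp [charFnRed, (isUnitriangular_charFn hrk).2 s]
  · simp only [Matrix.smul_apply, Matrix.sub_apply, Matrix.of_apply, smul_eq_mul,
      Matrix.one_apply_ne hst, mul_zero, sub_zero, sub_one_mul_charFnRed hst]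

theorem isUnitriangular_neg_charFnRed : IsUnitriangular (Matrix.of (-charFnRed rk)) := by
  refine ⟨fun s t h => ?_, fun s => by simp [charFnRed]⟩
  have : charFn rk s t = 0 := charFn_mem_incidenceSubring s t h
  simp [charFnRed, ne_of_not_le h, this]

end CharFn

section ChowFn

variable {P : Type*} [PartialOrder P] {rk : P → P → ℤ}

open scoped Classical in
noncomputable def chowStep (rk : P → P → ℤ) : Matrix P P ℤ[X] :=
  Matrix.of fun s t => if s < t then ∑ i ∈ Ico 1 (rk s t).toNat, X ^ i else 0

theorem sub_one_smul_chowStep [DecidableEq P] (hrk : IsWeakRank rk) :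
    (X - C 1 : ℤ[X]) • chowStep rk =
      Matrix.of (rev rk zeta) - (X : ℤ[X]) • Matrix.of zeta + (X - C 1 : ℤ[X]) • 1 := by
  ext s t : 1
  simp only [chowStep, Matrix.add_apply, Matrix.sub_apply, Matrix.smul_apply, Matrix.of_apply,
    smul_eq_mul, rev_zeta_apply, zeta, Matrix.one_apply]
  by_cases hst : s < t
  · have hpos := hrk.1 s t hst
    rw [if_pos hst, if_pos hst.le, if_pos hst.le, if_neg hst.ne, mul_comm, C_1,
      geom_sum_Ico_mul _ (by omega)]
    ring
  obtain rfl | hne := eq_or_ne s t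
  · simp [hrk.apply_self]
  · have hnle : ¬ s ≤ t := fun h => hst (h.lt_of_ne hne)
    simp [hst, hnle, hne]

theorem chowStep_apply_of_lt {s t : P} (h : s < t) :
    chowStep rk s t = ∑ i ∈ Ico 1 (rk s t).toNat, X ^ i := by
  simp [chowStep, h]

theorem chowStep_apply_of_not_lt {s t : P} (h : ¬ s < t) : chowStep rk s t = 0 := by
  simp [chowStep, h]

theorem chowStep_mem_lifts (s t : P) : chowStep rk s t ∈ lifts (Nat.castRingHom ℤ) := by
  by_cases h : s < t
  · rw [chowStep_apply_of_lt h]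
    exact sum_mem fun i _ => X_pow_mem_lifts _ i
  · rw [chowStep_apply_of_not_lt h]
    exact zero_mem _

theorem natDegree_chowStep_le (s t : P) : (chowStep rk s t).natDegree ≤ (rk s t).toNat - 1 := by
  by_cases h : s < t
  · rw [chowStep_apply_of_lt h]
    refine natDegree_sum_le_of_forall_le _ _ fun i hi => ?_
    rw [natDegree_X_pow]
    have := (Finset.mem_Ico.1 hi).2
    omega
  · simp [chowStep_apply_of_not_lt h]

variable [Fintype P]

theorem chowFn_eq_zeta_add_chowStep_mul (hrk : IsWeakRank rk) :
    Matrix.of (chowFn rk) = Matrix.of zeta + chowStep rk * Matrix.of (chowFn rk) := by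
  classical
  set H := Matrix.of (chowFn rk)
  have hinv : Matrix.of (charFnRed rk) * H = -1 :=
    neg_eq_iff_eq_neg.1 ((neg_mul _ _).symm.trans (mul_invInc isUnitriangular_neg_charFnRed))
  have hzeta : (X - C 1 : ℤ[X]) • Matrix.of zeta
      = (X : ℤ[X]) • (Matrix.of zeta * H) - Matrix.of (rev rk zeta) * H := by
    calc (X - C 1 : ℤ[X]) • Matrix.of zeta
        = -(Matrix.of zeta * ((X - C 1 : ℤ[X]) • Matrix.of (charFnRed rk)) * H) := by
          rw [Matrix.mul_smul, Matrix.smul_mul, mul_assoc, hinv, mul_neg_one, smul_neg, neg_neg]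
      _ = _ := by
          rw [sub_one_smul_charFnRed hrk, mul_sub, sub_mul, mul_assoc, ← zeta_mul_charFn,
            Matrix.mul_smul, Matrix.smul_mul, mul_one, mul_assoc]
          abel
  refine smul_right_injective _ (X_sub_C_ne_zero (1 : ℤ)) ?_
  change (X - C 1 : ℤ[X]) • H = (X - C 1 : ℤ[X]) • (Matrix.of zeta + chowStep rk * H)
  rw [smul_add, ← Matrix.smul_mul, sub_one_smul_chowStep hrk, hzeta, add_mul, sub_mul,
    Matrix.smul_mul, Matrix.smul_mul, one_mul]
  abel

theorem chowFn_apply (hrk : IsWeakRank rk) (s t : P) :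
    chowFn rk s t = zeta s t + ∑ u, chowStep rk s u * chowFn rk u t :=
  congrFun (congrFun (chowFn_eq_zeta_add_chowStep_mul hrk) s) t

theorem isUnitriangular_chowFn [DecidableEq P] : IsUnitriangular (Matrix.of (chowFn rk)) :=
  isUnitriangular_invInc isUnitriangular_neg_charFnRed

theorem chowFn_apply_self (s : P) : chowFn rk s s = 1 := by
  classical
  exact isUnitriangular_chowFn.2 s

theorem chowFn_apply_of_not_le {s t : P} (h : ¬ s ≤ t) : chowFn rk s t = 0 := by
  classical
  exact isUnitriangular_chowFn.1 s t h

theorem chowFn_mem_lifts (hrk : IsWeakRank rk) (s t : P) :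
    chowFn rk s t ∈ lifts (Nat.castRingHom ℤ) := by
  induction s using WellFoundedGT.induction with
  | _ s ih =>
    rw [chowFn_apply hrk]
    refine add_mem ?_ (sum_mem fun u _ => ?_)
    · unfold zeta
      split_ifs
      exacts [one_mem _, zero_mem _]
    · by_cases hsu : s < u
      · exact mul_mem (chowStep_mem_lifts s u) (ih u hsu)
      · simp [chowStep_apply_of_not_lt hsu]

theorem coeff_chowFn_nonneg (hrk : IsWeakRank rk) (s t : P) (k : ℕ) :
    0 ≤ (chowFn rk s t).coeff k :=
  coeff_nonneg_of_mem_lifts (chowFn_mem_lifts hrk s t) k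

theorem natDegree_chowFn_le (hrk : IsWeakRank rk) (s t : P) :
    (chowFn rk s t).natDegree ≤ (rk s t).toNat - 1 := by
  induction s using WellFoundedGT.induction with
  | _ s ih =>
    rw [chowFn_apply hrk]
    refine (natDegree_add_le _ _).trans (max_le ?_ ?_)
    · unfold zeta
      split_ifs <;> simp
    refine natDegree_sum_le_of_forall_le _ _ fun u _ => ?_
    by_cases hsu : s < u
    · by_cases hut : u ≤ t
      · have := natDegree_chowStep_le (rk := rk) s u
        have := ih u hsu
        have := hrk.toNat_add hsu.le hut
        have := hrk.1 s u hsu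
        refine natDegree_mul_le.trans ?_
        omega
      · simp [chowFn_apply_of_not_le hut]
    · simp [chowStep_apply_of_not_lt hsu]

/-- The coefficient of `x^{rk(s,t)-1}` receives `1` from `ζ` if `rk(s,t) = 1`, or from
`chowStep s t · H(t,t)` if `rk(s,t) ≥ 2`; all other contributions are nonnegative. -/
theorem one_le_coeff_chowFn (hrk : IsWeakRank rk) {s t : P} (hst : s < t) :
    1 ≤ (chowFn rk s t).coeff ((rk s t).toNat - 1) := by
  have hpos := hrk.1 s t hst
  set d := (rk s t).toNat - 1
  have hlast : (chowStep rk s t * chowFn rk t t).coeff d ≤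
      ∑ u, (chowStep rk s u * chowFn rk u t).coeff d :=
    Finset.single_le_sum (fun u _ => coeff_nonneg_of_mem_lifts
      (mul_mem (chowStep_mem_lifts s u) (chowFn_mem_lifts hrk u t)) d) (Finset.mem_univ t)
  rw [chowFn_apply hrk, coeff_add, finsetSum_coeff]
  simp only [chowFn_apply_self, mul_one, chowStep_apply_of_lt hst, finsetSum_coeff, coeff_X_pow,
    Finset.sum_ite_eq, Finset.mem_Ico] at hlast
  simp only [zeta, if_pos hst.le, coeff_one]
  split_ifs at hlast <;> split_ifs <;> omega

theorem natDegree_chowFn (hrk : IsWeakRank rk) {s t : P} (hst : s ≤ t) :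
    (chowFn rk s t).natDegree = (rk s t).toNat - 1 := by
  obtain rfl | hlt := hst.eq_or_lt
  · simp [chowFn_apply_self, hrk.apply_self]
  · refine (natDegree_chowFn_le hrk s t).antisymm (le_natDegree_of_ne_zero ?_)
    have := one_le_coeff_chowFn hrk hlt
    omega

end ChowFn

section MatroidRank

variable {α : Type*} [Finite α] (M : Matroid α)

theorem matRank_eq_eRk (X : Set α) : (matRank M X : ℕ∞) = M.eRk X := by
  obtain ⟨I, hI⟩ := M.exists_isBasis' X
  set S := {n | ∃ J, M.Indep J ∧ J ⊆ X ∧ J.ncard = n}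
  have hmem : I.ncard ∈ S := ⟨I, hI.indep, hI.subset, rfl⟩
  have hub : ∀ n ∈ S, n ≤ I.ncard := by
    rintro _ ⟨J, hJ, hJX, rfl⟩
    have := hJ.encard_le_eRk_of_subset hJX
    rwa [← hI.encard_eq_eRk, ← J.toFinite.cast_ncard_eq, ← I.toFinite.cast_ncard_eq,
      Nat.cast_le] at this
  have : matRank M X = I.ncard :=
    le_antisymm (csSup_le ⟨_, hmem⟩ hub) (le_csSup ⟨_, hub⟩ hmem)
  rw [this, I.toFinite.cast_ncard_eq, hI.encard_eq_eRk]

theorem matRank_closure_empty : matRank M (M.closure ∅) = 0 := by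
  have := matRank_eq_eRk M (M.closure ∅)
  rwa [M.eRk_closure_eq, M.eRk_empty, Nat.cast_eq_zero] at this

theorem matRank_lt_matRank_of_ssubset {F G : Set α} (hF : M.IsFlat F) (hG : G ⊆ M.E)
    (hFG : F ⊂ G) : matRank M F < matRank M G := by
  obtain ⟨e, heG, heF⟩ := Set.exists_of_ssubset hFG
  have hins := M.eRk_insert_eq_add_one ⟨hG heG, by rwa [hF.closure]⟩
  have hmono := M.eRk_mono (Set.insert_subset heG hFG.subset)
  rw [hins, ← matRank_eq_eRk, ← matRank_eq_eRk] at hmono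
  exact Nat.lt_of_succ_le (by exact_mod_cast hmono)

theorem flatRk_isWeakRank : IsWeakRank (flatRk M) := by
  refine ⟨fun F G hFG => ?_, fun _ _ _ _ _ => by simp only [flatRk]; ring⟩
  have := matRank_lt_matRank_of_ssubset M F.2 G.2.subset_ground hFG
  simp only [flatRk]
  omega

end MatroidRank

theorem chowHilbert_nonneg_degree_general {α : Type*} [Fintype α]
    (M : Matroid α) :
    (∀ k : ℕ, 0 ≤ (chowHilbert M).coeff k) ∧
      (chowHilbert M).natDegree = matRank M M.E - 1 := by
  have hrk := flatRk_isWeakRank M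
  refine ⟨coeff_chowFn_nonneg hrk _ _, ?_⟩
  rw [chowHilbert, natDegree_chowFn hrk (M.closure_subset_ground ∅)]
  simp [flatRk, matRank_closure_empty]

/-- The Chow polynomial `H_{∅,M}` of the lattice of flats of a loopless matroid (with
respect to the characteristic kernel) has nonnegative integer coefficients and
degree `rk(M) − 1`. -/
theorem chowHilbert_nonneg_degree {α : Type*} [Fintype α]
    (M : Matroid α) (hM : M.closure ∅ = ∅) :
    (∀ k : ℕ, 0 ≤ (chowHilbert M).coeff k) ∧
      (chowHilbert M).natDegree = matRank M M.E - 1 :=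
  chowHilbert_nonneg_degree_general M
end
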